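/- For γ ∈ (0, 1/4): (1!)^2/(1/γ - 2)_1 + 3·(2!)^2/(1/γ - 3)_2 + (3!)^2/(1/γ - 4)_3 = γ(1+5γ) / ((1-4γ)(1-3γ)(1-2γ)). -/

import Mathlib

/-- Ascending (Pochhammer) factorial `(a)_k = Γ(a+k)/Γ(a)`. -/
noncomputable def poch (a : ℝ) (k : ℕ) : ℝ := Real.Gamma (a + k) / Real.Gamma a

lemma poch_one {a : ℝ} (ha : 0 < a) : poch a 1 = a := by
  have h := Real.Gamma_add_one (ne_of_gt ha)
  have hG : Real.Gamma a ≠ 0 := (Real.Gamma_pos_of_pos ha).ne'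
  simp [poch, h]
  field_simp

lemma poch_two {a : ℝ} (ha : 0 < a) : poch a 2 = a * (a + 1) := by
  have h1 := Real.Gamma_add_one (ne_of_gt ha)
  have h2 := Real.Gamma_add_one (show a + 1 ≠ 0 by positivity)
  have hG : Real.Gamma a ≠ 0 := (Real.Gamma_pos_of_pos ha).ne'
  have : a + (2:ℕ) = (a + 1) + 1 := by push_cast; ring
  rw [poch, this, h2, h1]
  field_simp

lemma poch_three {a : ℝ} (ha : 0 < a) : poch a 3 = a * (a + 1) * (a + 2) := by
  have h1 := Real.Gamma_add_one (ne_of_gt ha)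
  have h2 := Real.Gamma_add_one (show a + 1 ≠ 0 by positivity)
  have h3 := Real.Gamma_add_one (show a + 2 ≠ 0 by positivity)
  have hG : Real.Gamma a ≠ 0 := (Real.Gamma_pos_of_pos ha).ne'
  have : a + (3:ℕ) = (a + 2) + 1 := by push_cast; ring
  rw [poch, this, h3, show a + 2 = (a + 1) + 1 by ring, h2, h1]
  field_simp

theorem stmt7 (γ : ℝ) (hγ : γ ∈ Set.Ioo (0 : ℝ) (1 / 4)) :
    ((Nat.factorial 1 : ℝ)) ^ 2 / poch (1 / γ - 2) 1 +
      3 * ((Nat.factorial 2 : ℝ)) ^ 2 / poch (1 / γ - 3) 2 +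
      ((Nat.factorial 3 : ℝ)) ^ 2 / poch (1 / γ - 4) 3
      = γ * (1 + 5 * γ) / ((1 - 4 * γ) * (1 - 3 * γ) * (1 - 2 * γ)) := by
  obtain ⟨h0, h4⟩ := hγ
  have hγ0 : γ ≠ 0 := ne_of_gt h0
  have hx : 4 < 1 / γ := by
    rw [lt_div_iff₀ h0]; linarith
  rw [poch_one (by linarith), poch_two (by linarith), poch_three (by linarith)]
  have d2 : 1 - 2 * γ ≠ 0 := by nlinarith
  have d3 : 1 - 3 * γ ≠ 0 := by nlinarith
  have d4 : 1 - 4 * γ ≠ 0 := by nlinarith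
  have f2 : 1 / γ - 2 ≠ 0 := by intro h; apply d2; field_simp at h ⊢; linarith
  have f3 : 1 / γ - 3 ≠ 0 := by intro h; apply d3; field_simp at h ⊢; linarith
  have f4 : 1 / γ - 4 ≠ 0 := by intro h; apply d4; field_simp at h ⊢; linarith
  have g3 : 1 / γ - 3 + 1 = 1 / γ - 2 := by ring
  have g4 : 1 / γ - 4 + 1 = 1 / γ - 3 := by ring
  have g5 : 1 / γ - 4 + 2 = 1 / γ - 2 := by ring
  rw [g3, g4, g5]
  norm_num [Nat.factorial]
  simp only [← one_div]
  rw [div_add_div _ _ f2 (mul_ne_zero f3 f2),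
      div_add_div _ _ (mul_ne_zero f2 (mul_ne_zero f3 f2)) (mul_ne_zero (mul_ne_zero f4 f3) f2),
      div_eq_div_iff (by positivity) (by intro h; simp_all [mul_eq_zero])]
  field_simp
  ring
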